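/- Let p_n(x) be the characteristic polynomial of the n×n affine Cartan matrix of type C_{n-1}^{(1)} (tridiagonal with 2 on the diagonal, entries -2, -1, …, -1 on the superdiagonal ordered so that C_{1,2} = -2 and C_{n,n-1} = -2, and -1 elsewhere on the sub/super diagonals). Then p_n(x) = x(x-4) ∑_{j=0}^{n-2} (-1)^{n+j} C(n+j-1, 2j+1) x^j. -/

import Mathlib

/-!
Put `y = x - 2`. Then `xI - C` is tridiagonal with `y` on the diagonal and `1` beside it, except
for a `2` at each end. Expanding along the first row twice gives `y D_{n-1} - 2 D_{n-2}`, where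
`D_k` is the determinant of the same kind of matrix with only the lower `2` left. The same
expansion shows that `D_k` obeys the Chebyshev recurrence `D_{k+2} = y D_{k+1} - D_k` with
`D_1 = y`, `D_2 = y² - 2`, so `D_k = C_k(y)`, the Vieta–Lucas polynomial (`C_k(t + t⁻¹) = t^k + t⁻ᵏ`).
Hence `p_n(x) = C_n(y) - C_{n-2}(y) = (y² - 4) S_{n-2}(y)` with `y² - 4 = x (x - 4)`, and the
coefficients of `S_m(x - 2)` satisfy a recurrence solved by Pascal's rule applied twice.
-/

open Polynomial Matrix Finset

theorem Nat.choose_add_two_add_choose (a k : ℕ) :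
    (a + 2).choose (k + 2) + a.choose (k + 2) = 2 * (a + 1).choose (k + 2) + a.choose k := by
  have h₁ : (a + 2).choose (k + 2) = (a + 1).choose (k + 1) + (a + 1).choose (k + 2) :=
    Nat.choose_succ_succ' _ _
  have h₂ : (a + 1).choose (k + 1) = a.choose k + a.choose (k + 1) := Nat.choose_succ_succ' _ _
  have h₃ : (a + 1).choose (k + 2) = a.choose (k + 1) + a.choose (k + 2) :=
    Nat.choose_succ_succ' _ _
  omega

namespace Polynomial.Chebyshev

variable {R : Type*} [CommRing R]

variable (R) in
theorem C_add_two_sub_C (n : ℤ) : C R (n + 2) - C R n = (X ^ 2 - 4) * S R n := by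
  linear_combination (norm := ring_nf) C_eq_S_sub_X_mul_S R (n + 2) - C_eq_S_sub_X_mul_S R n
    + 2 * S_add_two R n + X * S_add_one R n

theorem eval_S_sub_two (x : R) (m : ℕ) :
    (S R m).eval (x - 2) =
      ∑ j ∈ range (m + 1), (-1) ^ (m + j) * ((m + 1 + j).choose (2 * j + 1) : R) * x ^ j := by
  set f : ℕ → ℕ → R := fun m j ↦ (-1) ^ (m + j) * ((m + 1 + j).choose (2 * j + 1) : R) * x ^ j
  have extend (k N : ℕ) (h : k + 1 ≤ N) :
      ∑ j ∈ range (k + 1), f k j = ∑ j ∈ range N, f k j := by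
    refine sum_subset (range_subset_range.mpr h) fun j _ hj ↦ ?_
    simp [f, Nat.choose_eq_zero_of_lt (by simp at hj; omega : k + 1 + j < 2 * j + 1)]
  have recurrence (m : ℕ) : ∑ j ∈ range (m + 3), f (m + 2) j =
      (x - 2) * ∑ j ∈ range (m + 2), f (m + 1) j - ∑ j ∈ range (m + 1), f m j := by
    have pascal (i : ℕ) :
        f (m + 2) (i + 1) + 2 * f (m + 1) (i + 1) + f m (i + 1) = x * f (m + 1) i := by
      have h := Nat.choose_add_two_add_choose (m + 2 + i) (2 * i + 1)
      apply_fun ((↑) : ℕ → R) at h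
      push_cast at h
      simp only [f]
      linear_combination (norm := ring_nf) (-1) ^ (m + i + 1) * x ^ (i + 1) * h
    have boundary : f (m + 2) 0 + 2 * f (m + 1) 0 + f m 0 = 0 := by
      simp only [f]
      push_cast [Nat.choose_one_right]
      ring
    have hx : ∑ j ∈ range (m + 3), (f (m + 2) j + 2 * f (m + 1) j + f m j) =
        ∑ j ∈ range (m + 2), x * f (m + 1) j := by
      rw [sum_range_succ' _ (m + 2), boundary, add_zero]
      exact sum_congr rfl fun i _ ↦ pascal i
    rw [sum_add_distrib, sum_add_distrib, ← mul_sum, ← mul_sum,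
      ← extend (m + 1) (m + 3) (by omega), ← extend m (m + 3) (by omega)] at hx
    linear_combination hx
  induction m using Nat.twoStepInduction with
  | zero => simp
  | one => simp [sum_range_succ]; ring
  | more m ih₀ ih₁ =>
    push_cast at ih₁ ⊢
    rw [S_add_two, eval_sub, eval_mul, eval_X, ih₀, ih₁, recurrence]

end Polynomial.Chebyshev

namespace Matrix

variable {R : Type*} [CommRing R]

def tridiagonal (a b c : ℕ → R) (n : ℕ) : Matrix (Fin n) (Fin n) R :=
  of fun i j =>
    if (i : ℕ) = j then a i
    else if (i : ℕ) + 1 = j then b i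
    else if (j : ℕ) + 1 = i then c j
    else 0

theorem tridiagonal_submatrix_succ (a b c : ℕ → R) (n : ℕ) :
    (tridiagonal a b c (n + 1)).submatrix Fin.succ Fin.succ =
      tridiagonal (fun i ↦ a (i + 1)) (fun i ↦ b (i + 1)) (fun i ↦ c (i + 1)) n := by
  ext i j
  simp [tridiagonal]

theorem det_tridiagonal_add_two (a b c : ℕ → R) (n : ℕ) :
    (tridiagonal a b c (n + 2)).det =
      a 0 * (tridiagonal (fun i ↦ a (i + 1)) (fun i ↦ b (i + 1)) (fun i ↦ c (i + 1)) (n + 1)).det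
        - b 0 * c 0 *
          (tridiagonal (fun i ↦ a (i + 2)) (fun i ↦ b (i + 2)) (fun i ↦ c (i + 2)) n).det := by
  set M := tridiagonal a b c (n + 2)
  have hsucc : (Fin.succAbove 1 ∘ Fin.succ : Fin n → Fin (n + 2)) = Fin.succ ∘ Fin.succ := by
    funext j
    simp
  have hminor : (M.submatrix Fin.succ (Fin.succAbove 1)).det =
      c 0 * (tridiagonal (fun i ↦ a (i + 2)) (fun i ↦ b (i + 2)) (fun i ↦ c (i + 2)) n).det := by
    rw [det_succ_column_zero, Fin.sum_univ_succ, Fintype.sum_eq_zero _ fun i ↦ by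
      simp [M, tridiagonal], submatrix_submatrix, Fin.succAbove_zero, hsucc,
      ← submatrix_submatrix, tridiagonal_submatrix_succ, tridiagonal_submatrix_succ]
    simp [M, tridiagonal]
  rw [det_succ_row_zero, Fin.sum_univ_succ, Fin.sum_univ_succ, Fintype.sum_eq_zero _ fun j ↦ by
      simp [M, tridiagonal], Fin.succ_zero_eq_one, hminor, Fin.succAbove_zero,
      tridiagonal_submatrix_succ]
  simp [M, tridiagonal]
  ring

theorem det_tridiagonal_eq_eval_C (y : R) (n : ℕ) :
    (tridiagonal (fun _ ↦ y) (fun _ ↦ 1) (fun i ↦ if i + 1 = n then 2 else 1) (n + 1)).det =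
      (Chebyshev.C R (n + 1)).eval y := by
  induction n using Nat.twoStepInduction with
  | zero => simp [tridiagonal]
  | one =>
    rw [det_tridiagonal_add_two]
    simp [tridiagonal, Chebyshev.C_two, sq]
  | more n ih₀ ih₁ =>
    rw [det_tridiagonal_add_two]
    simp only [Nat.reduceEqDiff, ↓reduceIte, one_mul] at ih₁ ⊢
    push_cast at ih₁ ⊢
    rw [ih₀, ih₁, show (n : ℤ) + 2 + 1 = n + 1 + 2 by ring, Chebyshev.C_add_two]
    simp

variable (R) in
def affineCartanC (n : ℕ) : Matrix (Fin n) (Fin n) R :=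
  of fun i j =>
    if i = j then 2
    else if i.val = 0 ∧ j.val = 1 then -2
    else if i.val = n - 1 ∧ j.val = n - 2 then -2
    else if i.val + 1 = j.val ∨ j.val + 1 = i.val then -1
    else 0

theorem scalar_sub_affineCartanC (x : R) (n : ℕ) :
    scalar (Fin n) x - affineCartanC R n =
      tridiagonal (fun _ ↦ x - 2) (fun i ↦ if i = 0 then 2 else 1)
        (fun i ↦ if i + 2 = n then 2 else 1) n := by
  ext i j
  have := i.isLt
  have := j.isLt
  simp only [sub_apply, scalar_apply, affineCartanC, tridiagonal, of_apply, diagonal_apply,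
    Fin.ext_iff]
  split_ifs <;> first | (exfalso; omega) | ring

theorem eval_charpoly_affineCartanC (x : R) (m : ℕ) :
    (affineCartanC R (m + 3)).charpoly.eval x =
      x * (x - 4) * (Chebyshev.S R (m + 1 : ℕ)).eval (x - 2) := by
  have h₀ := det_tridiagonal_eq_eval_C (x - 2) m
  have h₁ := det_tridiagonal_eq_eval_C (x - 2) (m + 1)
  rw [eval_charpoly, scalar_sub_affineCartanC, det_tridiagonal_add_two]
  simp only [Nat.reduceEqDiff, ↓reduceIte, mul_one] at h₁ ⊢
  push_cast at h₁ ⊢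
  rw [h₀, h₁]
  have h := congrArg (eval (x - 2)) (Chebyshev.C_add_two_sub_C R (m + 1))
  simp only [Chebyshev.C_add_two, eval_sub, eval_mul, eval_X, eval_pow, eval_ofNat] at h
  linear_combination h

end Matrix

theorem charpoly_affine_cartan_C (n : ℕ) (hn : 3 ≤ n) (x : ℝ) :
    ((Matrix.of fun i j : Fin n =>
      if i = j then (2 : ℝ)
      else if i.val = 0 ∧ j.val = 1 then -2
      else if i.val = n - 1 ∧ j.val = n - 2 then -2
      else if i.val + 1 = j.val ∨ j.val + 1 = i.val then -1
      else 0).charpoly).eval x =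
    x * (x - 4) * ∑ j ∈ Finset.range (n - 1),
      (-1 : ℝ) ^ (n + j) * (Nat.choose (n + j - 1) (2 * j + 1)) * x ^ j := by
  obtain ⟨m, rfl⟩ : ∃ m, n = m + 3 := ⟨n - 3, by omega⟩
  change (affineCartanC ℝ (m + 3)).charpoly.eval x = _
  rw [eval_charpoly_affineCartanC, Chebyshev.eval_S_sub_two]
  congr 1
  refine sum_congr rfl fun j _ ↦ ?_
  rw [show m + 3 + j - 1 = m + 1 + 1 + j by omega]
  ring
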